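/- For every v ∈ M = ℝ × L × ℝ one has Δ_e(Φ(v)) = Δ_e(v), and also Δ_e(−w) = Δ_e(w) for every w ∈ M; hence Δ_e is invariant under the shifted transform Φ[1]: Δ_e(−Φ(v)) = Δ_e(v). -/
import Mathlib


/-- Cohomological relative Fourier–Mukai transform `Φ` on `M = ℝ × L × ℝ`. -/
noncomputable def PhiFM {L : Type*} [AddCommGroup L] [Module ℝ L] (e : ℝ)
    (B : L →ₗ[ℝ] L →ₗ[ℝ] ℝ) (Θ f : L) (v : ℝ × L × ℝ) : ℝ × L × ℝ :=
  (B f v.2.1,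
    -v.2.1 + (B f v.2.1 - v.1) • Θ +
      (B Θ v.2.1 + e / 2 * B f v.2.1 + v.2.2) • f,
    -(B Θ v.2.1 + e * B f v.2.1 - e / 2 * v.1))

/-- The discriminant `Δ(n,D,s) = ⟨D,D⟩ − 2ns`. -/
noncomputable def DeltaD {L : Type*} [AddCommGroup L] [Module ℝ L]
    (B : L →ₗ[ℝ] L →ₗ[ℝ] ℝ) (v : ℝ × L × ℝ) : ℝ :=
  B v.2.1 v.2.1 - 2 * v.1 * v.2.2

/-- The modified discriminant `Δ_e = Δ − e·n²`. -/
noncomputable def DeltaE {L : Type*} [AddCommGroup L] [Module ℝ L] (e : ℝ)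
    (B : L →ₗ[ℝ] L →ₗ[ℝ] ℝ) (v : ℝ × L × ℝ) : ℝ :=
  DeltaD B v - e * v.1 ^ 2

theorem stmt9 (e : ℝ) {L : Type*} [AddCommGroup L] [Module ℝ L]
    (B : L →ₗ[ℝ] L →ₗ[ℝ] ℝ) (hsymm : ∀ x y : L, B x y = B y x)
    (Θ f : L) (hΘΘ : B Θ Θ = -e) (hΘf : B Θ f = 1) (hff : B f f = 0) :
    (∀ v : ℝ × L × ℝ, DeltaE e B (PhiFM e B Θ f v) = DeltaE e B v) ∧
    (∀ w : ℝ × L × ℝ, DeltaE e B (-w) = DeltaE e B w) ∧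
    (∀ v : ℝ × L × ℝ, DeltaE e B (-PhiFM e B Θ f v) = DeltaE e B v) := by
  have hfΘ : B f Θ = 1 := by rw [hsymm]; exact hΘf
  have key : ∀ v : ℝ × L × ℝ, DeltaE e B (PhiFM e B Θ f v) = DeltaE e B v := by
    intro ⟨n, D, s⟩
    simp only [DeltaE, DeltaD, PhiFM, map_add, map_smul, map_neg, LinearMap.add_apply,
      LinearMap.smul_apply, LinearMap.neg_apply, smul_eq_mul, hΘΘ, hΘf, hff, hfΘ,
      hsymm D Θ, hsymm D f]
    ring
  have negkey : ∀ w : ℝ × L × ℝ, DeltaE e B (-w) = DeltaE e B w := by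
    intro ⟨n, D, s⟩
    simp only [DeltaE, DeltaD, Prod.fst_neg, Prod.snd_neg, map_neg, LinearMap.neg_apply]
    ring
  exact ⟨key, negkey, fun v => (negkey _).trans (key v)⟩
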